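/- arXiv:2410.10322 — 2 statements merged into one kernel-verified Lean document; each statement's English description precedes it below -/
import Mathlib

section
/- (Clean accuracy of the non-robust multi-class network) Let d, k ≥ 1 with d ≥ 2 and 2(k+1) · ln d < √d, and let μ : Fin k → ℝ^d be orthogonal equinorm cluster features with binary cluster labels s. Consider the multi-class network F̃ with components f_j(x) = ReLU(⟨μ_j + Σ_{l : s l = s j} μ_l, x⟩). Then with probability at least 1 − 2k · d^{−(ln d)/2} over (J, ξ) ~ (uniform on Fin k) ⊗ γ_d, the input x = μ_J + ξ is classified correctly, i.e., f_J(x) > f_j(x) for every j ≠ J. -/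
open MeasureTheory ProbabilityTheory Real Finset
open scoped RealInnerProductSpace

/-- The standard Gaussian measure on `ℝ^d`. -/
noncomputable def stdGaussian (d : ℕ) : Measure (EuclideanSpace ℝ (Fin d)) :=
  (Measure.pi fun _ : Fin d => gaussianReal 0 1).map (MeasurableEquiv.toLp 2 (Fin d → ℝ))

/-- The ReLU activation. -/
noncomputable def relu (z : ℝ) : ℝ := max z 0

/-- The `j`-th component of the non-robust multi-class network. -/
noncomputable def fMulti {d k : ℕ} (μ : Fin k → EuclideanSpace ℝ (Fin d)) (s : Fin k → ℝ)
    (j : Fin k) (x : EuclideanSpace ℝ (Fin d)) : ℝ :=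
  relu ⟪μ j + ∑ l ∈ univ.filter (fun l => s l = s j), μ l, x⟫

open scoped NNReal ENNReal

/-!
With `w j = μ j + ∑_{s l = s j} μ l` the weight of the `j`-th unit, orthogonality gives
`⟪w J, μ J⟫ = 2d` and `⟪w j, μ J⟫ ≤ d` for `j ≠ J`, so the true class wins as soon as every
`|⟪w j, ξ⟫|` is below `d / 2`. Each `⟪w j, ξ⟫` is a centred Gaussian of variance
`‖w j‖² ≤ ((k + 1) √d)²`, so the Chernoff bound at the level `(k + 1) √d ln d < d / 2` and a
union bound over the `2k` tails leave a failure probability of at most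
`2k exp (-(ln d)² / 2) = 2k d^(-(ln d) / 2)`.
-/

section Gaussian

variable {E : Type*} [NormedAddCommGroup E] [InnerProductSpace ℝ E] [FiniteDimensional ℝ E]
  [MeasurableSpace E] [BorelSpace E]

lemma map_inner_stdGaussian (w : E) :
    (stdGaussian E).map (⟪w, ·⟫) = gaussianReal 0 (‖w‖₊ ^ 2) := by
  have h := IsGaussian.map_eq_gaussianReal (μ := stdGaussian E) (innerSL ℝ w)
  rw [integral_strongDual_stdGaussian, variance_dual_stdGaussian, innerSL_apply_norm] at h
  convert h using 2 <;> ext <;> simp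

lemma hasSubgaussianMGF_inner_stdGaussian {w : E} {c : ℝ≥0} (hw : ‖w‖₊ ^ 2 ≤ c) :
    HasSubgaussianMGF (⟪w, ·⟫) c (stdGaussian E) where
  integrable_exp_mul t := by
    rw [← mgf_pos_iff, mgf_gaussianReal (map_inner_stdGaussian w)]
    exact exp_pos _
  mgf_le t := by
    have hw' : ‖w‖ ^ 2 ≤ (c : ℝ) := by exact_mod_cast hw
    rw [mgf_gaussianReal (map_inner_stdGaussian w), zero_mul, zero_add]
    gcongr

lemma stdGaussian_real_inner_ge_le {w : E} {σ ε : ℝ} (hw : ‖w‖ ≤ σ) (hε : 0 ≤ ε) :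
    (stdGaussian E).real {x | ε ≤ ⟪w, x⟫} ≤ exp (-ε ^ 2 / (2 * σ ^ 2)) := by
  have hσ : ((σ ^ 2).toNNReal : ℝ) = σ ^ 2 := Real.coe_toNNReal _ (sq_nonneg σ)
  have hc : ‖w‖₊ ^ 2 ≤ (σ ^ 2).toNNReal := by
    rw [← NNReal.coe_le_coe, hσ]
    push_cast
    gcongr
  simpa only [hσ] using (hasSubgaussianMGF_inner_stdGaussian hc).measure_ge_le hε

lemma stdGaussian_real_abs_inner_ge_le {w : E} {σ ε : ℝ} (hw : ‖w‖ ≤ σ) (hε : 0 ≤ ε) :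
    (stdGaussian E).real {x | ε ≤ |⟪w, x⟫|} ≤ 2 * exp (-ε ^ 2 / (2 * σ ^ 2)) := by
  have hsplit : {x : E | ε ≤ |⟪w, x⟫|} ⊆ {x | ε ≤ ⟪w, x⟫} ∪ {x | ε ≤ ⟪-w, x⟫} := fun x hx => by
    simpa [le_abs, inner_neg_left] using hx
  calc (stdGaussian E).real {x | ε ≤ |⟪w, x⟫|}
      ≤ (stdGaussian E).real {x | ε ≤ ⟪w, x⟫} + (stdGaussian E).real {x | ε ≤ ⟪-w, x⟫} :=
        (measureReal_mono hsplit).trans (measureReal_union_le _ _)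
    _ ≤ exp (-ε ^ 2 / (2 * σ ^ 2)) + exp (-ε ^ 2 / (2 * σ ^ 2)) :=
        add_le_add (stdGaussian_real_inner_ge_le hw hε)
          (stdGaussian_real_inner_ge_le ((norm_neg w).trans_le hw) hε)
    _ = 2 * exp (-ε ^ 2 / (2 * σ ^ 2)) := (two_mul _).symm

lemma one_sub_le_stdGaussian_real_forall_abs_inner_lt {ι : Type*} [Fintype ι] {w : ι → E} {σ ε : ℝ}
    (hw : ∀ i, ‖w i‖ ≤ σ) (hε : 0 ≤ ε) :
    1 - 2 * Fintype.card ι * exp (-ε ^ 2 / (2 * σ ^ 2))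
      ≤ (stdGaussian E).real {x | ∀ i, |⟪w i, x⟫| < ε} := by
  have hcompl : {x : E | ∀ i, |⟪w i, x⟫| < ε}ᶜ = ⋃ i, {x | ε ≤ |⟪w i, x⟫|} := by
    ext; simp
  have hmeas : MeasurableSet {x : E | ∀ i, |⟪w i, x⟫| < ε} := by
    simp only [Set.ofPred_forall]
    exact MeasurableSet.iInter fun i => measurableSet_lt (by fun_prop) measurable_const
  have hunion : (stdGaussian E).real (⋃ i, {x | ε ≤ |⟪w i, x⟫|})
      ≤ Fintype.card ι * (2 * exp (-ε ^ 2 / (2 * σ ^ 2))) := calc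
    _ ≤ ∑ i, (stdGaussian E).real {x | ε ≤ |⟪w i, x⟫|} := measureReal_iUnion_fintype_le _
    _ ≤ ∑ _i : ι, 2 * exp (-ε ^ 2 / (2 * σ ^ 2)) :=
      Finset.sum_le_sum fun i _ => stdGaussian_real_abs_inner_ge_le (hw i) hε
    _ = _ := by simp
  rw [← hcompl, probReal_compl_eq_one_sub hmeas] at hunion
  linarith

end Gaussian

section Network

variable {d k : ℕ}

lemma inner_sum_left_eq_ite {ι F : Type*} [NormedAddCommGroup F] [InnerProductSpace ℝ F]
    [DecidableEq ι] {v : ι → F} (hv : ∀ i j, i ≠ j → ⟪v i, v j⟫ = 0) (S : Finset ι) (j : ι) :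
    ⟪∑ i ∈ S, v i, v j⟫ = if j ∈ S then ‖v j‖ ^ 2 else 0 := by
  have h : ∀ i, ⟪v i, v j⟫ = if i = j then ‖v j‖ ^ 2 else 0 := fun i => by
    split_ifs with hij
    · rw [hij, real_inner_self_eq_norm_sq]
    · exact hv i j hij
  simp_rw [sum_inner, h, Finset.sum_ite_eq']

noncomputable def fMultiWeight (μ : Fin k → EuclideanSpace ℝ (Fin d)) (s : Fin k → ℝ)
    (j : Fin k) : EuclideanSpace ℝ (Fin d) :=
  μ j + ∑ l ∈ univ.filter (fun l => s l = s j), μ l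

lemma fMulti_eq_relu_inner (μ : Fin k → EuclideanSpace ℝ (Fin d)) (s : Fin k → ℝ) (j : Fin k)
    (x : EuclideanSpace ℝ (Fin d)) : fMulti μ s j x = relu ⟪fMultiWeight μ s j, x⟫ :=
  rfl

lemma norm_fMultiWeight_le {μ : Fin k → EuclideanSpace ℝ (Fin d)} (hnorm : ∀ j, ‖μ j‖ = √d)
    (s : Fin k → ℝ) (j : Fin k) : ‖fMultiWeight μ s j‖ ≤ (k + 1) * √d := by
  have hsum : ‖∑ l ∈ univ.filter (fun l => s l = s j), μ l‖ ≤ k * √d := calc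
    _ ≤ ∑ l ∈ univ.filter (fun l => s l = s j), ‖μ l‖ := norm_sum_le _ _
    _ ≤ ∑ _l : Fin k, √d := by
      simp only [hnorm]
      exact Finset.sum_le_sum_of_subset_of_nonneg (Finset.filter_subset _ _) fun _ _ _ => by
        positivity
    _ = k * √d := by simp
  calc ‖fMultiWeight μ s j‖ ≤ ‖μ j‖ + k * √d := (norm_add_le _ _).trans (by gcongr)
    _ = (k + 1) * √d := by rw [hnorm]; ring

lemma inner_fMultiWeight {μ : Fin k → EuclideanSpace ℝ (Fin d)} (hnorm : ∀ j, ‖μ j‖ = √d)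
    (horth : ∀ i j, i ≠ j → ⟪μ i, μ j⟫ = 0) (s : Fin k → ℝ) (j J : Fin k) :
    ⟪fMultiWeight μ s j, μ J⟫ =
      (if j = J then (d : ℝ) else 0) + (if s J = s j then (d : ℝ) else 0) := by
  have hsq : ‖μ J‖ ^ 2 = d := by rw [hnorm, sq_sqrt (Nat.cast_nonneg d)]
  rw [fMultiWeight, inner_add_left, inner_sum_left_eq_ite horth, hsq]
  congr 1
  split_ifs with h
  · rw [h, real_inner_self_eq_norm_sq, hsq]
  · exact horth j J h
  · simp

lemma fMulti_lt_fMulti_of_abs_inner_lt {μ : Fin k → EuclideanSpace ℝ (Fin d)}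
    (hnorm : ∀ j, ‖μ j‖ = √d) (horth : ∀ i j, i ≠ j → ⟪μ i, μ j⟫ = 0) (s : Fin k → ℝ)
    {j J : Fin k} (hj : j ≠ J) {ξ : EuclideanSpace ℝ (Fin d)}
    (hξ : ∀ i, |⟪fMultiWeight μ s i, ξ⟫| < d / 2) :
    fMulti μ s j (μ J + ξ) < fMulti μ s J (μ J + ξ) := by
  have hJ : ⟪fMultiWeight μ s J, μ J + ξ⟫ = 2 * d + ⟪fMultiWeight μ s J, ξ⟫ := by
    rw [inner_add_right, inner_fMultiWeight hnorm horth]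
    simp only [if_true]
    ring
  have hj' : ⟪fMultiWeight μ s j, μ J + ξ⟫ ≤ d + ⟪fMultiWeight μ s j, ξ⟫ := by
    rw [inner_add_right, inner_fMultiWeight hnorm horth, if_neg hj, zero_add]
    gcongr
    split_ifs <;> simp
  have hJξ := abs_lt.1 (hξ J)
  have hjξ := abs_lt.1 (hξ j)
  rw [fMulti_eq_relu_inner, fMulti_eq_relu_inner, relu, relu]
  exact max_lt (lt_max_of_lt_left (by linarith)) (lt_max_of_lt_left (by linarith))

end Network

lemma stdGaussian_eq_stdGaussian_euclideanSpace (d : ℕ) :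
    _root_.stdGaussian d = ProbabilityTheory.stdGaussian (EuclideanSpace ℝ (Fin d)) :=
  map_pi_eq_stdGaussian

lemma smul_count_univ_fin {k : ℕ} (hk : k ≠ 0) :
    ((k : ℝ≥0∞)⁻¹ • (Measure.count : Measure (Fin k))) Set.univ = 1 := by
  rw [Measure.smul_apply, Measure.count_univ, ENat.card_eq_coe_fintype_card, Fintype.card_fin]
  exact ENNReal.inv_mul_cancel (by exact_mod_cast hk) (ENNReal.natCast_ne_top k)

theorem multiclass_clean_accuracy_general (d k : ℕ) (hk : 1 ≤ k)
    (hlog : 2 * (k + 1) * Real.log d < Real.sqrt d)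
    (μ : Fin k → EuclideanSpace ℝ (Fin d))
    (hnorm : ∀ j, ‖μ j‖ = Real.sqrt d)
    (horth : ∀ i j, i ≠ j → ⟪μ i, μ j⟫ = 0)
    (s : Fin k → ℝ) :
    ENNReal.ofReal (1 - 2 * k * (d : ℝ) ^ (-(Real.log d) / 2)) ≤
      (((k : ENNReal)⁻¹ • (Measure.count : Measure (Fin k))).prod (stdGaussian d))
        {p : Fin k × EuclideanSpace ℝ (Fin d) |
          ∀ j : Fin k, j ≠ p.1 → fMulti μ s j (μ p.1 + p.2) < fMulti μ s p.1 (μ p.1 + p.2)} := by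
  have hd : (0 : ℝ) < d := Nat.cast_pos.2 <| Nat.pos_of_ne_zero <| by rintro rfl; simp at hlog
  set σ : ℝ := (k + 1) * √d
  set good := {ξ : EuclideanSpace ℝ (Fin d) | ∀ i, |⟪fMultiWeight μ s i, ξ⟫| < σ * log d}
  have hτ : σ * log d < d / 2 := by
    have := mul_lt_mul_of_pos_right hlog (sqrt_pos.2 hd)
    nlinarith [mul_self_sqrt hd.le]
  have hrate : (d : ℝ) ^ (-(log d) / 2) = exp (-(σ * log d) ^ 2 / (2 * σ ^ 2)) := by
    rw [rpow_def_of_pos hd]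
    congr 1
    field_simp [show σ ≠ 0 by positivity]
  calc ENNReal.ofReal (1 - 2 * k * (d : ℝ) ^ (-(log d) / 2))
      ≤ ENNReal.ofReal ((ProbabilityTheory.stdGaussian _).real good) := by
        refine ENNReal.ofReal_le_ofReal ?_
        simpa [hrate] using one_sub_le_stdGaussian_real_forall_abs_inner_lt
          (norm_fMultiWeight_le hnorm s) (by positivity)
    _ = ((((k : ENNReal)⁻¹ • Measure.count).prod (stdGaussian d)) (Set.univ ×ˢ good)) := by
        rw [ofReal_measureReal, stdGaussian_eq_stdGaussian_euclideanSpace, Measure.prod_prod,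
          smul_count_univ_fin (by omega), one_mul]
    _ ≤ _ := measure_mono fun p ⟨_, hp⟩ j hj =>
        fMulti_lt_fMulti_of_abs_inner_lt hnorm horth s hj fun i => (hp i).trans hτ

theorem multiclass_clean_accuracy (d k : ℕ) (hd : 2 ≤ d) (hk : 1 ≤ k)
    (hlog : 2 * (k + 1) * Real.log d < Real.sqrt d)
    (μ : Fin k → EuclideanSpace ℝ (Fin d))
    (hnorm : ∀ j, ‖μ j‖ = Real.sqrt d)
    (horth : ∀ i j, i ≠ j → ⟪μ i, μ j⟫ = 0)
    (s : Fin k → ℝ) (hs : ∀ j, s j = 1 ∨ s j = -1) :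
    ENNReal.ofReal (1 - 2 * k * (d : ℝ) ^ (-(Real.log d) / 2)) ≤
      (((k : ENNReal)⁻¹ • (Measure.count : Measure (Fin k))).prod (stdGaussian d))
        {p : Fin k × EuclideanSpace ℝ (Fin d) |
          ∀ j : Fin k, j ≠ p.1 → fMulti μ s j (μ p.1 + p.2) < fMulti μ s p.1 (μ p.1 + p.2)} :=
  multiclass_clean_accuracy_general d k hk hlog μ hnorm horth s
end

section
/- (A network in the feature-averaging regime has nearly perfect clean accuracy) Let d, k, m ≥ 1 with d ≥ 2 and 8k · ln d ≤ √d, let μ : Fin k → ℝ^d be orthogonal equinorm cluster features with binary cluster labels s, and let c ≥ 1 be real. Let f be a two-layer ReLU network with weights w : {−1,1} × Fin m → ℝ^d and biases b : {−1,1} × Fin m → ℝ, and suppose there are reals λ > 0 and ε ≥ 0 with (12 + 4c) · ε < λ such that for every σ ∈ {−1,1} and r ∈ Fin m: ‖w_{σ,r} − (λ/d) · Σ_{j ∈ J_σ} μ_j‖ ≤ ε/√d and |b_{σ,r}| ≤ ε (with J_σ = J₊ if σ = 1 and J_σ = J₋ if σ = −1). Then the probability over (J, ξ) ~ (uniform on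 Fin k) ⊗ γ_d that sgn(f(μ_J + ξ)) = s J is at least 1 − 2k · d^{−(ln d)/2} − 2 · d^{−ln d}. -/
open MeasureTheory ProbabilityTheory Real Finset
open scoped RealInnerProductSpace

/-- The sign function: `1` on positive reals, `-1` otherwise. -/
noncomputable def sgn (z : ℝ) : ℝ := if 0 < z then 1 else -1

/-- A two-layer ReLU network with `m` positive neurons (weights `wp`, biases `bp`)
and `m` negative neurons (weights `wn`, biases `bn`). -/
noncomputable def twoLayer {d m : ℕ} (wp wn : Fin m → EuclideanSpace ℝ (Fin d))
    (bp bn : Fin m → ℝ) (x : EuclideanSpace ℝ (Fin d)) : ℝ :=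
  (1 / m) * ∑ r : Fin m, relu (⟪wp r, x⟫ + bp r) -
    (1 / m) * ∑ r : Fin m, relu (⟪wn r, x⟫ + bn r)

/-!
Call the noise `ξ` typical if `|⟪μ j, ξ⟫| < √d log d` for every `j` and `‖ξ‖ < 2√d`.
By orthogonality, `⟪(λ/d) ∑_{i ∈ J_σ} μ i, μ j + ξ⟫` equals `λ` or `0` according as `j ∈ J_σ`,
up to the noise term `(λ/d) ∑_{i ∈ J_σ} ⟪μ i, ξ⟫`, which is at most `λ/8` on typical noise since
`8 k log d ≤ √d`. Hence every neuron of the correct sign fires at least `7λ/8 - 4ε` and every other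
neuron at most `λ/8 + 4ε`, so the network classifies `μ j + ξ` correctly for typical `ξ`.
Each `⟪μ j, ξ⟫` is `N(0, d)`, giving the tail `2 d^{-log d / 2}`, and the Chernoff bound for the
chi-square variable `‖ξ‖²`, whose moment generating function at `1/4` is `2^{d/2}`, gives
`P(‖ξ‖ ≥ 2√d) ≤ e^{-d/2} ≤ d^{-log d}`.
-/

namespace ProbabilityTheory

open scoped NNReal

lemma hasSubgaussianMGF_id_gaussianReal (v : ℝ≥0) : HasSubgaussianMGF id v (gaussianReal 0 v) where
  integrable_exp_mul := integrable_exp_mul_gaussianReal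
  mgf_le t := by simp [mgf_id_gaussianReal]

lemma mgf_sq_gaussianReal {t : ℝ} (ht : t < 1 / 2) :
    mgf (fun x ↦ x ^ 2) (gaussianReal 0 1) t = (√(1 - 2 * t))⁻¹ := by
  have hpdf (x : ℝ) : gaussianPDFReal 0 1 x • exp (t * x ^ 2) =
      (√(2 * π))⁻¹ * exp (-(1 / 2 - t) * x ^ 2) := by
    simp only [gaussianPDFReal, NNReal.coe_one, mul_one, sub_zero, smul_eq_mul]
    rw [mul_assoc, ← exp_add]
    ring_nf
  rw [mgf, integral_gaussianReal_eq_integral_smul one_ne_zero]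
  simp_rw [hpdf]
  have h2t : 0 < 1 - 2 * t := by linarith
  rw [integral_const_mul, integral_gaussian,
    show π / (1 / 2 - t) = 2 * π / (1 - 2 * t) by field_simp, sqrt_div' _ h2t.le]
  field_simp

lemma integrable_exp_mul_sq_gaussianReal {t : ℝ} (ht : t < 1 / 2) :
    Integrable (fun x ↦ exp (t * x ^ 2)) (gaussianReal 0 1) := by
  rw [← mgf_pos_iff, mgf_sq_gaussianReal ht, inv_pos, sqrt_pos]
  linarith

variable {E : Type*} [NormedAddCommGroup E] [InnerProductSpace ℝ E] [FiniteDimensional ℝ E]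
  [MeasurableSpace E] [BorelSpace E]

lemma stdGaussian_map_inner (a : E) :
    (stdGaussian E).map (fun x ↦ ⟪a, x⟫) = gaussianReal 0 (‖a‖₊ ^ 2) := by
  have h := IsGaussian.map_eq_gaussianReal (μ := stdGaussian E) (innerSL ℝ a)
  rw [integral_strongDual_stdGaussian, variance_dual_stdGaussian, innerSL_apply_norm] at h
  convert h using 2
  · ext; simp
  · rw [← NNReal.coe_inj]; simp

lemma hasSubgaussianMGF_inner_stdGaussian (a : E) :
    HasSubgaussianMGF (fun x ↦ ⟪a, x⟫) (‖a‖₊ ^ 2) (stdGaussian E) :=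
  HasSubgaussianMGF.of_map (X := id) (by fun_prop)
    (stdGaussian_map_inner a ▸ hasSubgaussianMGF_id_gaussianReal _)

lemma measureReal_abs_inner_ge_le (a : E) {ε : ℝ} (hε : 0 ≤ ε) :
    (stdGaussian E).real {x | ε ≤ |⟪a, x⟫|} ≤ 2 * exp (-ε ^ 2 / (2 * ‖a‖ ^ 2)) := by
  have hsplit : {x | ε ≤ |⟪a, x⟫|} ⊆ {x | ε ≤ ⟪a, x⟫} ∪ {x | ε ≤ ⟪-a, x⟫} := by
    intro x (hx : ε ≤ |⟪a, x⟫|)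
    rcases le_abs'.1 hx with h | h
    · right; simp only [Set.mem_ofPred_eq, inner_neg_left]; linarith
    · left; exact h
  calc (stdGaussian E).real {x | ε ≤ |⟪a, x⟫|}
      ≤ (stdGaussian E).real {x | ε ≤ ⟪a, x⟫} + (stdGaussian E).real {x | ε ≤ ⟪-a, x⟫} :=
        (measureReal_mono hsplit).trans (measureReal_union_le _ _)
    _ ≤ exp (-ε ^ 2 / (2 * ‖a‖ ^ 2)) + exp (-ε ^ 2 / (2 * ‖-a‖ ^ 2)) := by
        gcongr <;> exact_mod_cast (hasSubgaussianMGF_inner_stdGaussian _).measure_ge_le hε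
    _ = 2 * exp (-ε ^ 2 / (2 * ‖a‖ ^ 2)) := by rw [norm_neg]; ring

end ProbabilityTheory

lemma stdGaussian_eq_stdGaussian (d : ℕ) :
    stdGaussian d = ProbabilityTheory.stdGaussian (EuclideanSpace ℝ (Fin d)) :=
  map_pi_eq_stdGaussian

instance (d : ℕ) : IsProbabilityMeasure (stdGaussian d) :=
  stdGaussian_eq_stdGaussian d ▸ inferInstance

section NormSq

variable {d : ℕ} {t : ℝ}

lemma exp_mul_norm_toLp_sq (x : Fin d → ℝ) :
    exp (t * ‖WithLp.toLp 2 x‖ ^ 2) = ∏ i, exp (t * x i ^ 2) := by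
  rw [EuclideanSpace.norm_sq_eq, mul_sum, exp_sum]
  simp

lemma integrable_exp_mul_norm_sq_stdGaussian (ht : t < 1 / 2) :
    Integrable (fun ξ : EuclideanSpace ℝ (Fin d) ↦ exp (t * ‖ξ‖ ^ 2)) (stdGaussian d) := by
  rw [_root_.stdGaussian, integrable_map_equiv]
  simp_rw [Function.comp_def, MeasurableEquiv.coe_toLp, exp_mul_norm_toLp_sq]
  exact Integrable.fintype_prod fun _ ↦ integrable_exp_mul_sq_gaussianReal ht

lemma mgf_norm_sq_stdGaussian (ht : t < 1 / 2) :
    mgf (fun ξ : EuclideanSpace ℝ (Fin d) ↦ ‖ξ‖ ^ 2) (stdGaussian d) t = (√(1 - 2 * t))⁻¹ ^ d := by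
  rw [mgf, _root_.stdGaussian, integral_map_equiv]
  simp_rw [MeasurableEquiv.coe_toLp, exp_mul_norm_toLp_sq]
  rw [integral_fintype_prod_eq_pow fun x ↦ exp (t * x ^ 2), ← mgf_sq_gaussianReal ht,
    Fintype.card_fin]
  rfl

lemma measureReal_norm_sq_ge_le (ε : ℝ) (ht₀ : 0 ≤ t) (ht : t < 1 / 2) :
    (stdGaussian d).real {ξ | ε ≤ ‖ξ‖ ^ 2} ≤ exp (-t * ε) * (√(1 - 2 * t))⁻¹ ^ d := by
  rw [← mgf_norm_sq_stdGaussian ht]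
  exact measure_ge_le_exp_mul_mgf ε ht₀ (integrable_exp_mul_norm_sq_stdGaussian ht)

end NormSq

lemma sqrt_two_pow_le_exp (n : ℕ) : √2 ^ n ≤ exp (n / 2) := by
  have h : √2 ≤ exp (1 / 2) := by
    rw [sqrt_le_left (by positivity), ← exp_nat_mul, show ((2 : ℕ) : ℝ) * (1 / 2) = 1 by norm_num]
    linarith [add_one_le_exp (1 : ℝ)]
  calc √2 ^ n ≤ exp (1 / 2) ^ n := by gcongr
    _ = exp (n / 2) := by rw [← exp_nat_mul]; ring_nf

section Tails

variable {d k : ℕ} {μ : Fin k → EuclideanSpace ℝ (Fin d)}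

lemma measureReal_abs_inner_ge_sqrt_mul_log_le (hd : 0 < d) (j : Fin k)
    (hnorm : ‖μ j‖ = √d) :
    (stdGaussian d).real {ξ | √d * log d ≤ |⟪μ j, ξ⟫|} ≤ 2 * (d : ℝ) ^ (-log d / 2) := by
  have hd' : (0 : ℝ) < d := by exact_mod_cast hd
  rw [stdGaussian_eq_stdGaussian]
  refine (measureReal_abs_inner_ge_le (μ j) (by positivity)).trans_eq ?_
  rw [hnorm, mul_pow, sq_sqrt hd'.le, rpow_def_of_pos hd']
  congr 2
  field_simp

lemma measureReal_norm_ge_le (hd : 0 < d) (h64 : 64 * log d ^ 2 ≤ d) :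
    (stdGaussian d).real {ξ : EuclideanSpace ℝ (Fin d) | 2 * √d ≤ ‖ξ‖} ≤
      (d : ℝ) ^ (-log d) := by
  have hd' : (0 : ℝ) < d := by exact_mod_cast hd
  have hsub : {ξ : EuclideanSpace ℝ (Fin d) | 2 * √d ≤ ‖ξ‖} ⊆ {ξ | 4 * d ≤ ‖ξ‖ ^ 2} := by
    intro ξ (hξ : 2 * √d ≤ ‖ξ‖)
    have := pow_le_pow_left₀ (by positivity) hξ 2
    rw [mul_pow, sq_sqrt hd'.le] at this
    norm_num at this
    exact this
  refine (measureReal_mono hsub).trans ?_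
  refine (measureReal_norm_sq_ge_le (4 * d) (t := 1 / 4) (by norm_num) (by norm_num)).trans ?_
  rw [show (√(1 - 2 * (1 / 4) : ℝ))⁻¹ = √2 by rw [← sqrt_inv]; norm_num,
    rpow_def_of_pos hd']
  calc exp (-(1 / 4) * (4 * d)) * √2 ^ d ≤ exp (-d) * exp (d / 2) := by
        rw [show -(1 / 4) * (4 * d : ℝ) = -d by ring]
        gcongr
        exact sqrt_two_pow_le_exp d
    _ ≤ exp (log d * -log d) := by
        rw [← exp_add]; gcongr; nlinarith

end Tails

def typicalNoise {d k : ℕ} (μ : Fin k → EuclideanSpace ℝ (Fin d)) :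
    Set (EuclideanSpace ℝ (Fin d)) :=
  {ξ | (∀ j, |⟪μ j, ξ⟫| < √d * log d) ∧ ‖ξ‖ < 2 * √d}

lemma measureReal_typicalNoise_compl_le {d k : ℕ} {μ : Fin k → EuclideanSpace ℝ (Fin d)}
    (hd : 0 < d) (h64 : 64 * log d ^ 2 ≤ d) (hnorm : ∀ j, ‖μ j‖ = √d) :
    (stdGaussian d).real (typicalNoise μ)ᶜ ≤
      2 * k * (d : ℝ) ^ (-log d / 2) + (d : ℝ) ^ (-log d) := by
  have hsub : (typicalNoise μ)ᶜ ⊆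
      (⋃ j, {ξ | √d * log d ≤ |⟪μ j, ξ⟫|}) ∪ {ξ | 2 * √d ≤ ‖ξ‖} := by
    intro ξ hξ
    simp only [typicalNoise, Set.mem_compl_iff, Set.mem_ofPred_eq, not_and_or, not_forall,
      not_lt] at hξ
    rcases hξ with ⟨j, hj⟩ | hξ
    · exact Or.inl (Set.mem_iUnion.2 ⟨j, hj⟩)
    · exact Or.inr hξ
  calc (stdGaussian d).real (typicalNoise μ)ᶜ
      ≤ ∑ j, (stdGaussian d).real {ξ | √d * log d ≤ |⟪μ j, ξ⟫|} +
          (stdGaussian d).real {ξ | 2 * √d ≤ ‖ξ‖} :=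
        (measureReal_mono hsub).trans <| (measureReal_union_le _ _).trans <|
          add_le_add_left (measureReal_iUnion_fintype_le _) _
    _ ≤ ∑ _j : Fin k, 2 * (d : ℝ) ^ (-log d / 2) + (d : ℝ) ^ (-log d) := by
        gcongr with j
        · exact measureReal_abs_inner_ge_sqrt_mul_log_le hd j (hnorm j)
        · exact measureReal_norm_ge_le hd h64
    _ = 2 * k * (d : ℝ) ^ (-log d / 2) + (d : ℝ) ^ (-log d) := by
        rw [sum_const, card_univ, Fintype.card_fin, nsmul_eq_mul]; ring

section Deterministic

variable {E : Type*} [NormedAddCommGroup E] [InnerProductSpace ℝ E]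

lemma inner_smul_sum_add {ι : Type*} [DecidableEq ι] {μ : ι → E}
    (horth : ∀ i j, i ≠ j → ⟪μ i, μ j⟫ = 0) (c : ℝ) (S : Finset ι) (j : ι) (ξ : E) :
    ⟪c • ∑ i ∈ S, μ i, μ j + ξ⟫ =
      (if j ∈ S then c * ‖μ j‖ ^ 2 else 0) + c * ∑ i ∈ S, ⟪μ i, ξ⟫ := by
  have hdiag : ∀ i ∈ S, ⟪μ i, μ j⟫ = if i = j then ‖μ j‖ ^ 2 else 0 := by
    intro i _
    split_ifs with h
    · rw [h, real_inner_self_eq_norm_sq]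
    · exact horth i j h
  rw [real_inner_smul_left, inner_add_right, sum_inner, sum_inner, sum_congr rfl hdiag,
    sum_ite_eq', mul_add, mul_ite, mul_zero]

lemma abs_inner_add_sub_inner_le (w v x : E) (b : ℝ) :
    |⟪w, x⟫ + b - ⟪v, x⟫| ≤ ‖w - v‖ * ‖x‖ + |b| := by
  calc |⟪w, x⟫ + b - ⟪v, x⟫| = |⟪w - v, x⟫ + b| := by rw [inner_sub_left]; ring_nf
    _ ≤ |⟪w - v, x⟫| + |b| := abs_add_le _ _
    _ ≤ ‖w - v‖ * ‖x‖ + |b| := by gcongr; exact abs_real_inner_le_norm _ _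

end Deterministic

section Preactivation

variable {d k : ℕ} {μ : Fin k → EuclideanSpace ℝ (Fin d)}

lemma abs_featureSum_inner_sub_le (hd : 0 < d) (hnorm : ∀ j, ‖μ j‖ = √d)
    (horth : ∀ i j, i ≠ j → ⟪μ i, μ j⟫ = 0) {lam : ℝ} (hlam : 0 ≤ lam)
    (hK : k * log d ≤ √d / 8) (S : Finset (Fin k)) (j : Fin k)
    {ξ : EuclideanSpace ℝ (Fin d)} (hξ : ξ ∈ typicalNoise μ) :
    |⟪(lam / d) • ∑ i ∈ S, μ i, μ j + ξ⟫ - (if j ∈ S then lam else 0)| ≤ lam / 8 := by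
  have hd' : (0 : ℝ) < d := by exact_mod_cast hd
  have hdiag : lam / d * ‖μ j‖ ^ 2 = lam := by
    rw [hnorm, sq_sqrt hd'.le]; field_simp
  have hsum : |∑ i ∈ S, ⟪μ i, ξ⟫| ≤ k * (√d * log d) :=
    calc |∑ i ∈ S, ⟪μ i, ξ⟫| ≤ ∑ i ∈ S, |⟪μ i, ξ⟫| := abs_sum_le_sum_abs _ _
      _ ≤ S.card * (√d * log d) := by
          rw [← nsmul_eq_mul]; exact sum_le_card_nsmul _ _ _ fun i _ ↦ (hξ.1 i).le
      _ ≤ k * (√d * log d) := by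
          gcongr
          simpa using card_le_univ S
  rw [inner_smul_sum_add horth, hdiag, add_sub_cancel_left, abs_mul, abs_of_nonneg (by positivity)]
  calc lam / d * |∑ i ∈ S, ⟪μ i, ξ⟫| ≤ lam / d * (k * log d * √d) := by
        gcongr; linarith
    _ ≤ lam / d * (√d / 8 * √d) := by gcongr
    _ = lam / 8 := by rw [mul_comm (√d / 8), ← mul_div_assoc, mul_self_sqrt hd'.le]; field_simp

lemma abs_preactivation_sub_le (hd : 0 < d)
    (hnorm : ∀ j, ‖μ j‖ = √d) (horth : ∀ i j, i ≠ j → ⟪μ i, μ j⟫ = 0) {lam eps : ℝ}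
    (hlam : 0 ≤ lam) (hK : k * log d ≤ √d / 8) {S : Finset (Fin k)}
    {w : EuclideanSpace ℝ (Fin d)} {b : ℝ} (hw : ‖w - (lam / d) • ∑ i ∈ S, μ i‖ ≤ eps / √d)
    (hb : |b| ≤ eps) (j : Fin k) {ξ : EuclideanSpace ℝ (Fin d)} (hξ : ξ ∈ typicalNoise μ) :
    |⟪w, μ j + ξ⟫ + b - (if j ∈ S then lam else 0)| ≤ lam / 8 + 4 * eps := by
  have hsd : 0 < √d := sqrt_pos.2 (by exact_mod_cast hd)
  have hx : ‖μ j + ξ‖ ≤ 3 * √d := by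
    linarith [norm_add_le (μ j) ξ, hnorm j, hξ.2]
  have hneuron := abs_inner_add_sub_inner_le w ((lam / d) • ∑ i ∈ S, μ i) (μ j + ξ) b
  have herr : ‖w - (lam / d) • ∑ i ∈ S, μ i‖ * ‖μ j + ξ‖ + |b| ≤ 4 * eps :=
    calc _ ≤ eps / √d * (3 * √d) + eps := by gcongr; exact (norm_nonneg _).trans hw
      _ = 4 * eps := by field_simp; ring
  have hmean := abs_featureSum_inner_sub_le hd hnorm horth hlam hK S j hξ
  linarith [abs_sub_le (⟪w, μ j + ξ⟫ + b) ⟪(lam / d) • ∑ i ∈ S, μ i, μ j + ξ⟫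
    (if j ∈ S then lam else 0)]

end Preactivation

lemma le_relu (z : ℝ) : z ≤ relu z := le_max_left z 0

lemma relu_le {z B : ℝ} (hz : z ≤ B) (hB : 0 ≤ B) : relu z ≤ B := max_le hz hB

section Network

variable {d m : ℕ} {wp wn : Fin m → EuclideanSpace ℝ (Fin d)} {bp bn : Fin m → ℝ}
  {x : EuclideanSpace ℝ (Fin d)}

lemma twoLayer_swap : twoLayer wn wp bn bp x = -twoLayer wp wn bp bn x := by
  simp only [twoLayer]; ring

lemma twoLayer_pos_of_bounds (hm : 0 < m) {A B : ℝ} (hB : 0 ≤ B) (hAB : B < A)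
    (hp : ∀ r, A ≤ ⟪wp r, x⟫ + bp r) (hn : ∀ r, ⟪wn r, x⟫ + bn r ≤ B) :
    0 < twoLayer wp wn bp bn x := by
  have hm' : (0 : ℝ) < m := by exact_mod_cast hm
  have hsp : m * A ≤ ∑ r, relu (⟪wp r, x⟫ + bp r) := by
    simpa using card_nsmul_le_sum univ (fun r ↦ relu (⟪wp r, x⟫ + bp r)) A
      fun r _ ↦ (hp r).trans (le_relu _)
  have hsn : ∑ r, relu (⟪wn r, x⟫ + bn r) ≤ m * B := by
    simpa using sum_le_card_nsmul univ (fun r ↦ relu (⟪wn r, x⟫ + bn r)) B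
      fun r _ ↦ relu_le (hn r) hB
  rw [twoLayer, ← mul_sub]
  have hgap : 0 < m * (A - B) := mul_pos hm' (sub_pos.2 hAB)
  have : 0 < ∑ r, relu (⟪wp r, x⟫ + bp r) - ∑ r, relu (⟪wn r, x⟫ + bn r) := by
    linarith
  positivity

end Network

lemma sgn_of_pos {z : ℝ} (hz : 0 < z) : sgn z = 1 := if_pos hz

lemma sgn_of_neg {z : ℝ} (hz : z < 0) : sgn z = -1 := if_neg hz.not_gt

section Classification

variable {d k m : ℕ} {μ : Fin k → EuclideanSpace ℝ (Fin d)}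
  {wp wn : Fin m → EuclideanSpace ℝ (Fin d)} {bp bn : Fin m → ℝ} {lam eps : ℝ}

lemma twoLayer_pos_of_mem_of_notMem (hd : 0 < d) (hm : 0 < m) (hnorm : ∀ j, ‖μ j‖ = √d)
    (horth : ∀ i j, i ≠ j → ⟪μ i, μ j⟫ = 0) (heps : 0 ≤ eps) (hmargin : 32 * eps < 3 * lam)
    (hK : k * log d ≤ √d / 8) {S S' : Finset (Fin k)}
    (hwp : ∀ r, ‖wp r - (lam / d) • ∑ i ∈ S, μ i‖ ≤ eps / √d)
    (hwn : ∀ r, ‖wn r - (lam / d) • ∑ i ∈ S', μ i‖ ≤ eps / √d)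
    (hbp : ∀ r, |bp r| ≤ eps) (hbn : ∀ r, |bn r| ≤ eps) {j : Fin k} (hjS : j ∈ S)
    (hjS' : j ∉ S') {ξ : EuclideanSpace ℝ (Fin d)} (hξ : ξ ∈ typicalNoise μ) :
    0 < twoLayer wp wn bp bn (μ j + ξ) := by
  have hlam : 0 ≤ lam := by linarith
  refine twoLayer_pos_of_bounds hm (A := 7 * lam / 8 - 4 * eps) (B := lam / 8 + 4 * eps)
    (by positivity) (by linarith) (fun r ↦ ?_) (fun r ↦ ?_)
  · have h := abs_preactivation_sub_le hd hnorm horth hlam hK (hwp r) (hbp r) j hξ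
    rw [if_pos hjS] at h
    linarith [(abs_le.1 h).1]
  · have h := abs_preactivation_sub_le hd hnorm horth hlam hK (hwn r) (hbn r) j hξ
    rw [if_neg hjS', sub_zero] at h
    exact (abs_le.1 h).2

lemma sgn_twoLayer_eq_label (hd : 0 < d) (hm : 0 < m) (hnorm : ∀ j, ‖μ j‖ = √d)
    (horth : ∀ i j, i ≠ j → ⟪μ i, μ j⟫ = 0) {s : Fin k → ℝ} (hs : ∀ j, s j = 1 ∨ s j = -1)
    (heps : 0 ≤ eps) (hmargin : 32 * eps < 3 * lam) (hK : k * log d ≤ √d / 8)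
    (hwp : ∀ r, ‖wp r - (lam / d) • ∑ j ∈ univ.filter (fun j => s j = 1), μ j‖ ≤ eps / √d)
    (hwn : ∀ r, ‖wn r - (lam / d) • ∑ j ∈ univ.filter (fun j => s j = -1), μ j‖ ≤ eps / √d)
    (hbp : ∀ r, |bp r| ≤ eps) (hbn : ∀ r, |bn r| ≤ eps) (j : Fin k)
    {ξ : EuclideanSpace ℝ (Fin d)} (hξ : ξ ∈ typicalNoise μ) :
    sgn (twoLayer wp wn bp bn (μ j + ξ)) = s j := by
  rcases hs j with hj | hj
  · rw [hj]
    exact sgn_of_pos <| twoLayer_pos_of_mem_of_notMem hd hm hnorm horth heps hmargin hK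
      hwp hwn hbp hbn (by simp [hj]) (by norm_num [hj]) hξ
  · rw [hj]
    refine sgn_of_neg (neg_pos.1 ?_)
    rw [← twoLayer_swap]
    exact twoLayer_pos_of_mem_of_notMem hd hm hnorm horth heps hmargin hK hwn hwp hbn hbp
      (by simp [hj]) (by norm_num [hj]) hξ

end Classification

instance {k : ℕ} [NeZero k] :
    IsProbabilityMeasure ((k : ENNReal)⁻¹ • (Measure.count : Measure (Fin k))) where
  measure_univ := by
    rw [Measure.smul_apply, Measure.count_univ, ENat.card_eq_coe_fintype_card, Fintype.card_fin]
    exact ENNReal.inv_mul_cancel (NeZero.ne _) (by simp)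

lemma ofReal_le_measure_of_le_one_sub {α : Type*} [MeasurableSpace α] {P : Measure α}
    [IsProbabilityMeasure P] {s : Set α} {a : ℝ} (ha : a ≤ 1 - P.real sᶜ) :
    ENNReal.ofReal a ≤ P s := by
  have h : 1 ≤ P.real s + P.real sᶜ := by
    simpa [Set.union_compl_self] using measureReal_union_le (μ := P) s sᶜ
  exact ENNReal.ofReal_le_of_le_toReal (by rw [← measureReal_def]; linarith)

lemma measure_le_prod_apply {α β : Type*} [MeasurableSpace α] [MeasurableSpace β]
    {ν : Measure α} [IsProbabilityMeasure ν] {P : Measure β} [SFinite P] {G : Set β}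
    {A : Set (α × β)} (hA : ∀ a, ∀ b ∈ G, (a, b) ∈ A) : P G ≤ (ν.prod P) A :=
  calc P G = (ν.prod P) (Set.univ ×ˢ G) := by rw [Measure.prod_prod, measure_univ, one_mul]
    _ ≤ (ν.prod P) A := measure_mono fun p hp ↦ hA p.1 p.2 hp.2

theorem featureAveragingRegime_clean_accuracy_general (d k m : ℕ) (hd : 2 ≤ d) (hk : 1 ≤ k)
    (hm : 1 ≤ m) (hlog : 8 * k * Real.log d ≤ Real.sqrt d)
    (μ : Fin k → EuclideanSpace ℝ (Fin d))
    (hnorm : ∀ j, ‖μ j‖ = Real.sqrt d)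
    (horth : ∀ i j, i ≠ j → ⟪μ i, μ j⟫ = 0)
    (s : Fin k → ℝ) (hs : ∀ j, s j = 1 ∨ s j = -1)
    (c : ℝ) (hc : 1 ≤ c)
    (wp wn : Fin m → EuclideanSpace ℝ (Fin d)) (bp bn : Fin m → ℝ)
    (lam eps : ℝ) (heps : 0 ≤ eps) (hle : (12 + 4 * c) * eps < lam)
    (hwp : ∀ r, ‖wp r - (lam / d) • ∑ j ∈ univ.filter (fun j => s j = 1), μ j‖ ≤
      eps / Real.sqrt d)
    (hwn : ∀ r, ‖wn r - (lam / d) • ∑ j ∈ univ.filter (fun j => s j = -1), μ j‖ ≤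
      eps / Real.sqrt d)
    (hbp : ∀ r, |bp r| ≤ eps) (hbn : ∀ r, |bn r| ≤ eps) :
    ENNReal.ofReal (1 - 2 * k * (d : ℝ) ^ (-(Real.log d) / 2) -
        2 * (d : ℝ) ^ (-(Real.log d))) ≤
      (((k : ENNReal)⁻¹ • (Measure.count : Measure (Fin k))).prod (stdGaussian d))
        {p : Fin k × EuclideanSpace ℝ (Fin d) |
          sgn (twoLayer wp wn bp bn (μ p.1 + p.2)) = s p.1} := by
  have : NeZero k := ⟨by omega⟩
  have hd0 : 0 < d := by omega
  have hK : (k : ℝ) * log d ≤ √d / 8 := by linarith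
  have h64 : 64 * log d ^ 2 ≤ d := by
    have h8 : 8 * log d ≤ √d := by
      nlinarith [log_natCast_nonneg d, (show (1 : ℝ) ≤ k by exact_mod_cast hk)]
    nlinarith [sq_sqrt (Nat.cast_nonneg (α := ℝ) d), log_natCast_nonneg d]
  have hmargin : 32 * eps < 3 * lam := by nlinarith
  have htail := measureReal_typicalNoise_compl_le hd0 h64 hnorm
  calc _ ≤ stdGaussian d (typicalNoise μ) := by
        refine ofReal_le_measure_of_le_one_sub ?_
        linarith [rpow_nonneg (Nat.cast_nonneg (α := ℝ) d) (-log d)]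
    _ ≤ _ := measure_le_prod_apply fun j _ hξ ↦
        sgn_twoLayer_eq_label hd0 hm hnorm horth hs heps hmargin hK hwp hwn hbp hbn j hξ

theorem featureAveragingRegime_clean_accuracy (d k m : ℕ) (hd : 2 ≤ d) (hk : 1 ≤ k)
    (hm : 1 ≤ m) (hlog : 8 * k * Real.log d ≤ Real.sqrt d)
    (μ : Fin k → EuclideanSpace ℝ (Fin d))
    (hnorm : ∀ j, ‖μ j‖ = Real.sqrt d)
    (horth : ∀ i j, i ≠ j → ⟪μ i, μ j⟫ = 0)
    (s : Fin k → ℝ) (hs : ∀ j, s j = 1 ∨ s j = -1)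
    (c : ℝ) (hc : 1 ≤ c)
    (wp wn : Fin m → EuclideanSpace ℝ (Fin d)) (bp bn : Fin m → ℝ)
    (lam eps : ℝ) (hlam : 0 < lam) (heps : 0 ≤ eps) (hle : (12 + 4 * c) * eps < lam)
    (hwp : ∀ r, ‖wp r - (lam / d) • ∑ j ∈ univ.filter (fun j => s j = 1), μ j‖ ≤
      eps / Real.sqrt d)
    (hwn : ∀ r, ‖wn r - (lam / d) • ∑ j ∈ univ.filter (fun j => s j = -1), μ j‖ ≤
      eps / Real.sqrt d)
    (hbp : ∀ r, |bp r| ≤ eps) (hbn : ∀ r, |bn r| ≤ eps) :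
    ENNReal.ofReal (1 - 2 * k * (d : ℝ) ^ (-(Real.log d) / 2) -
        2 * (d : ℝ) ^ (-(Real.log d))) ≤
      (((k : ENNReal)⁻¹ • (Measure.count : Measure (Fin k))).prod (stdGaussian d))
        {p : Fin k × EuclideanSpace ℝ (Fin d) |
          sgn (twoLayer wp wn bp bn (μ p.1 + p.2)) = s p.1} :=
  featureAveragingRegime_clean_accuracy_general d k m hd hk hm hlog μ hnorm horth s hs c hc wp wn bp
    bn lam eps heps hle hwp hwn hbp hbn
end
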